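/- Let r ≥ 0, n ≥ 1, let T be the r-dimensional torus, i.e. the product of r copies of the circle group {z ∈ ℂ : |z| = 1}, and let σ be a group automorphism of T with σⁿ = id. Then the kernel of the homomorphism φ' : T^σ → T/H (inclusion followed by quotient) is a finite group whose order divides nʳ. -/

import Mathlib

/-- For an abelian group `T` with automorphism `σ`, the homomorphism `q(t) = t σ(t)⁻¹`. -/
def qHom (T : Type*) [CommGroup T] (σ : T ≃* T) : T →* T where
  toFun t := t * (σ t)⁻¹
  map_one' := by simp
  map_mul' := by
    intro a b
    simp only [map_mul, mul_inv]
    exact mul_mul_mul_comm a b (σ a)⁻¹ (σ b)⁻¹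

/-!
If `t = s σ(s)⁻¹` is fixed by `σ`, then `tⁿ = ∏_{k<n} σᵏ(t)` telescopes to `s σⁿ(s)⁻¹ = 1`.
So the kernel of `φ'` is a subgroup of the `n`-torsion of `T`, which for the `r`-torus is
`(μₙ)ʳ`, of order `nʳ`; Lagrange's theorem gives the divisibility.
-/

section

variable {T : Type*} [CommGroup T] {σ : T ≃* T} {n : ℕ}

lemma prod_range_iterate_qHom_eq_one (hσn : ∀ t : T, (⇑σ)^[n] t = t) (s : T) :
    ∏ k ∈ Finset.range n, (⇑σ)^[k] (qHom T σ s) = 1 := by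
  simp only [qHom, MonoidHom.coe_mk, OneHom.coe_mk, ← div_eq_mul_inv, iterate_map_div,
    ← Function.iterate_succ_apply]
  rw [Finset.prod_range_div', Function.iterate_zero_apply, hσn, div_self']

lemma pow_eq_one_of_fixed_of_mem_range_qHom (hσn : ∀ t : T, (⇑σ)^[n] t = t) {t : T}
    (hfix : σ t = t) (ht : t ∈ (qHom T σ).range) : t ^ n = 1 := by
  obtain ⟨s, rfl⟩ := ht
  rw [← prod_range_iterate_qHom_eq_one hσn s,
    Finset.prod_congr rfl fun k _ ↦ Function.iterate_fixed hfix k, Finset.prod_const,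
    Finset.card_range]

lemma eqLocus_inf_range_qHom_le_ker_powMonoidHom (hσn : ∀ t : T, (⇑σ)^[n] t = t) :
    σ.toMonoidHom.eqLocus (MonoidHom.id T) ⊓ (qHom T σ).range ≤ (powMonoidHom n).ker :=
  fun _ ht ↦ pow_eq_one_of_fixed_of_mem_range_qHom hσn ht.1 ht.2

theorem ker_fixed_to_quotient_finite_and_card_dvd (hσn : ∀ t : T, (⇑σ)^[n] t = t)
    [Finite (powMonoidHom n : T →* T).ker] :
    Finite {t : T // σ t = t ∧ (QuotientGroup.mk t : T ⧸ (qHom T σ).range) = 1} ∧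
    Nat.card {t : T // σ t = t ∧ (QuotientGroup.mk t : T ⧸ (qHom T σ).range) = 1} ∣
      Nat.card (powMonoidHom n : T →* T).ker := by
  have hle := eqLocus_inf_range_qHom_le_ker_powMonoidHom hσn
  have e : {t : T // σ t = t ∧ (QuotientGroup.mk t : T ⧸ (qHom T σ).range) = 1} ≃
      (σ.toMonoidHom.eqLocus (MonoidHom.id T) ⊓ (qHom T σ).range :) :=
    Equiv.subtypeEquivRight fun t ↦ by
      rw [QuotientGroup.eq_one_iff, Subgroup.mem_inf]; exact Iff.rfl
  have := Finite.of_injective _ (Subgroup.inclusion_injective hle)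
  exact ⟨.of_equiv _ e.symm, Nat.card_congr e ▸ Subgroup.card_dvd_of_le hle⟩

end

lemma natCard_ker_powMonoidHom {G : Type*} [CommGroup G] (n : ℕ) [NeZero n]
    [HasEnoughRootsOfUnity G n] : Nat.card (powMonoidHom n : G →* G).ker = n := by
  refine (Nat.card_congr ?_).trans (HasEnoughRootsOfUnity.natCard_rootsOfUnity G n)
  exact toUnits.toEquiv.subtypeEquiv fun g ↦ by simp [mem_rootsOfUnity, ← map_pow]

lemma natCard_ker_powMonoidHom_pi {ι G : Type*} [Fintype ι] [CommGroup G] (n : ℕ) :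
    Nat.card (powMonoidHom n : (ι → G) →* (ι → G)).ker =
      Nat.card (powMonoidHom n : G →* G).ker ^ Fintype.card ι := by
  rw [← Finset.card_univ, ← Finset.prod_const, ← Nat.card_pi]
  exact Nat.card_congr <| (Equiv.subtypeEquivRight fun t ↦ by
    simp [funext_iff]).trans Equiv.subtypePiEquivPi

/-- Let `T` be the `r`-dimensional torus (a product of `r` copies of the circle group)
and `σ` an automorphism of `T` with `σⁿ = id`.  Then the kernel of the homomorphism
`φ' : T^σ → T/H` (inclusion followed by the quotient map, where `H = Im q`) is a finite
group whose order divides `nʳ`. -/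
theorem torus_ker_fixed_to_quotient_card_dvd
    (r n : ℕ) (hn : 1 ≤ n)
    (σ : (Fin r → Circle) ≃* (Fin r → Circle))
    (hσn : ∀ t : Fin r → Circle, (⇑σ)^[n] t = t) :
    Finite {t : Fin r → Circle // σ t = t ∧
        (QuotientGroup.mk t : (Fin r → Circle) ⧸ (qHom (Fin r → Circle) σ).range) = 1} ∧
    Nat.card {t : Fin r → Circle // σ t = t ∧
        (QuotientGroup.mk t : (Fin r → Circle) ⧸ (qHom (Fin r → Circle) σ).range) = 1} ∣
      n ^ r := by
  have : NeZero n := ⟨by omega⟩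
  have hcard : Nat.card (powMonoidHom n : (Fin r → Circle) →* _).ker = n ^ r := by
    rw [natCard_ker_powMonoidHom_pi, natCard_ker_powMonoidHom, Fintype.card_fin]
  have : Finite (powMonoidHom n : (Fin r → Circle) →* _).ker :=
    Nat.finite_of_card_ne_zero (hcard ▸ pow_ne_zero r (NeZero.ne n))
  exact hcard ▸ ker_fixed_to_quotient_finite_and_card_dvd hσn
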